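/- Proposition (quadratic remainder for the expected entry-game score, continuous covariates). Suppose: (i) for all x ∈ 𝒳, η_j(θ;x) ≥ c and η₁(θ;x) − η_j(θ;x) ≥ c for j = 2,3, η_j(θ;x) ≤ 1, and ‖∇_θη_j(θ;x)‖ ≤ C; (ii) p₀(y|x) ≥ c for all (y,x); (iii) for j = 1,2, the conditional probability density function of Z_j(X; p₀) given the discrete subvector X_d of X is uniformly bounded on its support (the unconditional density if there are no discrete covariates). Then there exists a constant c' < ∞ such that for every δ > 0 and every conditional pmf p with sup_{y,x}|p(y|x) − p₀(y|x)| ≤ δ: ‖ E[ m_θ(X; p) ] − E[ m_θ(X; p₀) ] ‖ ≤ c' δ². Consequently, the pathwise derivative of p ↦ E[m_θ(X;p)] at p₀ exists, equals zero in every direction, and the quadratic-remainder expansion of Assumption 2 holds for the entry game. -/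

import Mathlib

/-!
Weighted by `p₀`, the score is affine in the regime indicators (`I₁ = 1 - I₂ - I₃`), and a switch
of `I₂` (resp. `I₃`) at `x` changes it by `±Z₁(x;p₀)` (resp. `±Z₂(x;p₀)`) times a vector of norm
at most `2C/c²`. Since `η₁ ≤ 1`, a sup-norm perturbation of `p` of size `δ` moves `Z_j`
by at most `δ`, so the regime can only switch where `|Z_j(x;p₀)| ≤ δ`, and there the weighted
score moves by `O(δ)`. The bounded density of `Z_j(X;p₀)` given `X_d` gives that event
probability `O(δ)`, so the expected score moves by `O(δ²)`; along `p₀ + τ (p - p₀)` this is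
`O(τ²)`, whence the zero directional derivative.
-/

open scoped BigOperators
open Classical

noncomputable section

/-- Outcomes of the two-player entry game. -/
inductive EntryOutcome : Type
  | y00 | y01 | y10 | y11
deriving DecidableEq

instance : Fintype EntryOutcome :=
  ⟨{.y00, .y01, .y10, .y11}, by intro x; cases x <;> simp⟩

namespace EntryGame

variable {𝒳 : Type*} {d : ℕ}

/-- `Z₁(x;p) = p((1,0)|x) η₁(x) − (p((1,0)|x)+p((0,1)|x)) η₂(x)`. -/
def Z1 (η₁ η₂ : 𝒳 → ℝ) (p : 𝒳 → EntryOutcome → ℝ) (x : 𝒳) : ℝ :=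
  p x .y10 * η₁ x - (p x .y10 + p x .y01) * η₂ x

/-- `Z₂(x;p) = p((1,0)|x) η₁(x) − (p((1,0)|x)+p((0,1)|x)) η₃(x)`. -/
def Z2 (η₁ η₃ : 𝒳 → ℝ) (p : 𝒳 → EntryOutcome → ℝ) (x : 𝒳) : ℝ :=
  p x .y10 * η₁ x - (p x .y10 + p x .y01) * η₃ x

/-- Regime indicator `I₁ = 1{Z₁ ≤ 0}·1{Z₂ ≥ 0}`. -/
def I1 (η₁ η₂ η₃ : 𝒳 → ℝ) (p : 𝒳 → EntryOutcome → ℝ) (x : 𝒳) : ℝ :=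
  if Z1 η₁ η₂ p x ≤ 0 ∧ 0 ≤ Z2 η₁ η₃ p x then 1 else 0

/-- Regime indicator `I₂ = 1{Z₁ > 0}`. -/
def I2 (η₁ η₂ : 𝒳 → ℝ) (p : 𝒳 → EntryOutcome → ℝ) (x : 𝒳) : ℝ :=
  if 0 < Z1 η₁ η₂ p x then 1 else 0

/-- Regime indicator `I₃ = 1{Z₂ < 0}`. -/
def I3 (η₁ η₃ : 𝒳 → ℝ) (p : 𝒳 → EntryOutcome → ℝ) (x : 𝒳) : ℝ :=
  if Z2 η₁ η₃ p x < 0 then 1 else 0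

/-- The entry-game score `s_θ(y|x;p)`; `g j = ∇_θ η_j`, and the scores of the outcomes
`(0,0)` and `(1,1)` (which do not depend on `p`) are the given `s00`, `s11`. -/
def score (η₁ η₂ η₃ : 𝒳 → ℝ) (g₁ g₂ g₃ s00 s11 : 𝒳 → Fin d → ℝ)
    (p : 𝒳 → EntryOutcome → ℝ) (x : 𝒳) : EntryOutcome → Fin d → ℝ
  | .y00 => s00 x
  | .y11 => s11 x
  | .y10 =>
      (I1 η₁ η₂ η₃ p x / η₁ x) • g₁ x + (I2 η₁ η₂ p x / η₂ x) • g₂ x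
        + (I3 η₁ η₃ p x / η₃ x) • g₃ x
  | .y01 =>
      (I1 η₁ η₂ η₃ p x / η₁ x) • g₁ x
        + (I2 η₁ η₂ p x / (η₁ x - η₂ x)) • (g₁ x - g₂ x)
        + (I3 η₁ η₃ p x / (η₁ x - η₃ x)) • (g₁ x - g₃ x)

/-- The score discrepancy `Δ(x; p, p₀) = ‖Σ_y p₀(y|x)(s_θ(y|x;p) − s_θ(y|x;p₀))‖`. -/
def Δ (η₁ η₂ η₃ : 𝒳 → ℝ) (g₁ g₂ g₃ s00 s11 : 𝒳 → Fin d → ℝ)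
    (p p₀ : 𝒳 → EntryOutcome → ℝ) (x : 𝒳) : ℝ :=
  ‖∑ y : EntryOutcome, p₀ x y •
      (score η₁ η₂ η₃ g₁ g₂ g₃ s00 s11 p x y - score η₁ η₂ η₃ g₁ g₂ g₃ s00 s11 p₀ x y)‖

end EntryGame

open EntryGame Filter MeasureTheory
open scoped Topology

/-- Expected score `E[m_θ(X;p)] = ∫ Σ_y p₀(y|x) s_θ(y|x;p) dμ(x)`, where `μ` is the
distribution of the covariates. -/
noncomputable def expectedScoreInt {𝒳 : Type*} [MeasurableSpace 𝒳] {d : ℕ}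
    (η₁ η₂ η₃ : 𝒳 → ℝ) (g₁ g₂ g₃ s00 s11 : 𝒳 → Fin d → ℝ)
    (μ : Measure 𝒳) (p₀ p : 𝒳 → EntryOutcome → ℝ) : Fin d → ℝ :=
  ∫ x, (∑ y : EntryOutcome, p₀ x y •
      EntryGame.score η₁ η₂ η₃ g₁ g₂ g₃ s00 s11 p x y) ∂μ

def IsCondPMF {α Y : Type*} [Fintype Y] (q : α → Y → ℝ) : Prop :=
  ∀ x, (∀ y, 0 ≤ q x y) ∧ ∑ y, q x y = 1

theorem IsCondPMF.le_one {α Y : Type*} [Fintype Y] {q : α → Y → ℝ} (hq : IsCondPMF q)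
    (x : α) (y : Y) : q x y ≤ 1 :=
  (hq x).2 ▸ Finset.single_le_sum (fun y _ => (hq x).1 y) (Finset.mem_univ y)

theorem IsCondPMF.abs_sub_le_one {α Y : Type*} [Fintype Y] {q q' : α → Y → ℝ}
    (hq : IsCondPMF q) (hq' : IsCondPMF q') (x : α) (y : Y) : |q x y - q' x y| ≤ 1 :=
  abs_sub_le_of_nonneg_of_le ((hq x).1 y) (hq.le_one x y) ((hq' x).1 y) (hq'.le_one x y)

theorem IsCondPMF.add_mul_sub {α Y : Type*} [Fintype Y] {q q₀ : α → Y → ℝ} {c τ : ℝ}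
    (hq : IsCondPMF q) (hq₀ : IsCondPMF q₀) (hq₀c : ∀ x y, c ≤ q₀ x y) (hτ : |τ| ≤ c) :
    IsCondPMF fun x y => q₀ x y + τ * (q x y - q₀ x y) := by
  intro x
  refine ⟨fun y => ?_, ?_⟩
  · have hdev : |τ * (q x y - q₀ x y)| ≤ |τ| := by
      rw [abs_mul]
      exact mul_le_of_le_one_right (abs_nonneg τ) (hq.abs_sub_le_one hq₀ x y)
    linarith [neg_abs_le (τ * (q x y - q₀ x y)), hq₀c x y]
  · rw [Finset.sum_add_distrib, ← Finset.mul_sum, Finset.sum_sub_distrib, (hq x).2, (hq₀ x).2]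
    ring

theorem EntryOutcome.sum_univ {M : Type*} [AddCommMonoid M] (f : EntryOutcome → M) :
    ∑ y, f y = f .y00 + f .y01 + f .y10 + f .y11 := by
  rw [show (Finset.univ : Finset EntryOutcome) = {.y00, .y01, .y10, .y11} from rfl]
  simp [add_assoc]

theorem pos_iff_pos_of_abs_sub_le {a b δ : ℝ} (h : |a - b| ≤ δ) (hb : δ < |b|) :
    0 < a ↔ 0 < b := by
  rw [abs_le] at h
  rcases lt_abs.1 hb with hb | hb <;> constructor <;> intro <;> linarith

theorem neg_iff_neg_of_abs_sub_le {a b δ : ℝ} (h : |a - b| ≤ δ) (hb : δ < |b|) :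
    a < 0 ↔ b < 0 := by
  rw [abs_le] at h
  rcases lt_abs.1 hb with hb | hb <;> constructor <;> intro <;> linarith

theorem norm_mul_smul_le_indicator {E : Type*} [SeminormedAddCommGroup E] [NormedSpace ℝ E]
    {J Z δ K : ℝ} {w : E} (hJ : |J| ≤ 1) (hflip : δ < |Z| → J = 0) (hw : ‖w‖ ≤ K) :
    ‖(J * Z) • w‖ ≤ {t : ℝ | |t| ≤ δ}.indicator (fun _ => δ * K) Z := by
  by_cases hZ : |Z| ≤ δ
  · rw [Set.indicator_of_mem (show Z ∈ {t : ℝ | |t| ≤ δ} from hZ), norm_smul, norm_mul,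
      Real.norm_eq_abs, Real.norm_eq_abs]
    have hδ : 0 ≤ δ := (abs_nonneg Z).trans hZ
    calc |J| * |Z| * ‖w‖ ≤ 1 * δ * K := by gcongr
      _ = δ * K := by rw [one_mul]
  · rw [Set.indicator_of_notMem (show Z ∉ {t : ℝ | |t| ≤ δ} from hZ), hflip (not_le.1 hZ),
      zero_mul, zero_smul, norm_zero]

theorem norm_integral_sub_integral_le {α E : Type*} [MeasurableSpace α] [NormedAddCommGroup E]
    [NormedSpace ℝ E] {μ : Measure α} {f g : α → E} (hfg : Integrable (f - g) μ) :
    ‖∫ x, f x ∂μ - ∫ x, g x ∂μ‖ ≤ ∫ x, ‖f x - g x‖ ∂μ := by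
  by_cases hg : Integrable g μ
  · have hf : Integrable f μ := by simpa using hfg.add hg
    rw [← integral_sub hf hg]
    exact norm_integral_le_integral_norm _
  · have hf : ¬ Integrable f μ := fun hf => hg (by simpa using hf.sub hfg)
    rw [integral_undef hf, integral_undef hg, sub_zero, norm_zero]
    exact integral_nonneg fun _ => norm_nonneg _

theorem measureReal_abs_le_le {α ι : Type*} [MeasurableSpace α] [Fintype ι] {μ : Measure α}
    {f : α → ℝ} {π : α → ι} {Cf δ : ℝ} (hδ : 0 ≤ δ)
    (hf : ∀ i, ∀ a b : ℝ, a ≤ b →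
      μ {x | π x = i ∧ f x ∈ Set.Icc a b} ≤ ENNReal.ofReal (Cf * (b - a))) :
    μ.real {x | |f x| ≤ δ} ≤ Fintype.card ι * (max Cf 0 * (2 * δ)) := by
  refine ENNReal.toReal_le_of_le_ofReal (by positivity) ?_
  calc μ {x | |f x| ≤ δ} ≤ ∑ i, μ {x | π x = i ∧ f x ∈ Set.Icc (-δ) δ} := by
        refine (measure_mono fun x hx => ?_).trans (measure_iUnion_fintype_le μ _)
        exact Set.mem_iUnion.2 ⟨π x, rfl, abs_le.1 hx⟩
    _ ≤ ∑ _i : ι, ENNReal.ofReal (max Cf 0 * (2 * δ)) := by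
        gcongr with i
        refine (hf i _ _ (by linarith)).trans (ENNReal.ofReal_le_ofReal ?_)
        rw [sub_neg_eq_add, ← two_mul]
        gcongr
        exact le_max_left _ _
    _ = ENNReal.ofReal (Fintype.card ι * (max Cf 0 * (2 * δ))) := by
        rw [Finset.sum_const, Finset.card_univ, nsmul_eq_mul,
          ENNReal.ofReal_mul (Nat.cast_nonneg _), ENNReal.ofReal_natCast]

theorem tendsto_inv_smul_of_norm_le_mul_sq {E : Type*} [SeminormedAddCommGroup E]
    [NormedSpace ℝ E] {l : Filter ℝ} (hl : l ≤ 𝓝 0) {φ : ℝ → E} {K : ℝ}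
    (h : ∀ᶠ τ in l, ‖φ τ‖ ≤ K * τ ^ 2) : Tendsto (fun τ => τ⁻¹ • φ τ) l (𝓝 0) := by
  refine squeeze_zero_norm' (a := fun τ => K * |τ|) ?_ ?_
  · filter_upwards [h] with τ hτ
    rw [norm_smul, norm_inv, Real.norm_eq_abs]
    calc |τ|⁻¹ * ‖φ τ‖ ≤ |τ|⁻¹ * (K * |τ| ^ 2) := by rw [sq_abs]; gcongr
      _ = K * |τ| := by
        rcases eq_or_ne τ 0 with rfl | hτ
        · simp
        · field_simp
  · have hK : Tendsto (fun τ : ℝ => K * |τ|) (𝓝 0) (𝓝 (K * |0|)) :=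
      (continuous_const.mul continuous_abs).tendsto 0
    simpa using hK.mono_left hl

namespace EntryGame

variable {𝒳 : Type*} {d : ℕ} {η₁ η₂ η₃ : 𝒳 → ℝ} {g₁ g₂ g₃ s00 s11 : 𝒳 → Fin d → ℝ}
  {p p₀ : 𝒳 → EntryOutcome → ℝ} {x : 𝒳} {c C δ : ℝ}

structure EtaMargins (c : ℝ) (η₁ η₂ η₃ : 𝒳 → ℝ) : Prop where
  le_η₂ : ∀ x, c ≤ η₂ x
  le_η₃ : ∀ x, c ≤ η₃ x
  le_η₁_sub_η₂ : ∀ x, c ≤ η₁ x - η₂ x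
  le_η₁_sub_η₃ : ∀ x, c ≤ η₁ x - η₃ x
  η₃_le_η₂ : ∀ x, η₃ x ≤ η₂ x
  η₁_le_one : ∀ x, η₁ x ≤ 1

def switchDirection (η₁ η₂ : 𝒳 → ℝ) (g₁ g₂ : 𝒳 → Fin d → ℝ) (x : 𝒳) : Fin d → ℝ :=
  (η₂ x * (η₁ x - η₂ x))⁻¹ • g₂ x - (η₁ x * (η₁ x - η₂ x))⁻¹ • g₁ x

theorem Z1_le_Z2 (h32 : η₃ x ≤ η₂ x) (h10 : 0 ≤ p x .y10) (h01 : 0 ≤ p x .y01) :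
    Z1 η₁ η₂ p x ≤ Z2 η₁ η₃ p x := by
  unfold Z1 Z2
  linarith [mul_nonneg (add_nonneg h10 h01) (sub_nonneg.2 h32)]

theorem I1_eq (h : Z1 η₁ η₂ p x ≤ Z2 η₁ η₃ p x) :
    I1 η₁ η₂ η₃ p x = 1 - I2 η₁ η₂ p x - I3 η₁ η₃ p x := by
  unfold I1 I2 I3
  by_cases h₁ : 0 < Z1 η₁ η₂ p x
  · rw [if_neg fun h' => not_le.2 h₁ h'.1, if_pos h₁, if_neg (not_lt.2 (h₁.trans_le h).le)]
    ring
  · by_cases h₂ : Z2 η₁ η₃ p x < 0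
    · rw [if_neg fun h' => not_le.2 h₂ h'.2, if_neg h₁, if_pos h₂]
      ring
    · rw [if_pos ⟨not_lt.1 h₁, not_lt.1 h₂⟩, if_neg h₁, if_neg h₂]
      ring

theorem sum_smul_score_sub (h2 : 0 < η₂ x) (h3 : 0 < η₃ x) (h12 : 0 < η₁ x - η₂ x)
    (h13 : 0 < η₁ x - η₃ x) (h32 : η₃ x ≤ η₂ x) (hp : ∀ y, 0 ≤ p x y) (hp₀ : ∀ y, 0 ≤ p₀ x y) :
    ∑ y, p₀ x y • (score η₁ η₂ η₃ g₁ g₂ g₃ s00 s11 p x y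
        - score η₁ η₂ η₃ g₁ g₂ g₃ s00 s11 p₀ x y)
      = ((I2 η₁ η₂ p x - I2 η₁ η₂ p₀ x) * Z1 η₁ η₂ p₀ x) • switchDirection η₁ η₂ g₁ g₂ x
        + ((I3 η₁ η₃ p x - I3 η₁ η₃ p₀ x) * Z2 η₁ η₃ p₀ x) • switchDirection η₁ η₃ g₁ g₃ x := by
  have h1 : η₁ x ≠ 0 := by linarith
  simp only [EntryOutcome.sum_univ, score, I1_eq (Z1_le_Z2 h32 (hp _) (hp _)),
    I1_eq (Z1_le_Z2 h32 (hp₀ _) (hp₀ _))]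
  ext i
  simp only [switchDirection, Z1, Z2, Pi.add_apply, Pi.smul_apply, Pi.sub_apply, smul_eq_mul]
  field_simp
  ring

theorem norm_switchDirection_le (hc : 0 < c) (h2 : c ≤ η₂ x) (h12 : c ≤ η₁ x - η₂ x)
    (hg₁ : ‖g₁ x‖ ≤ C) (hg₂ : ‖g₂ x‖ ≤ C) :
    ‖switchDirection η₁ η₂ g₁ g₂ x‖ ≤ 2 * C / c ^ 2 := by
  have hinv : ∀ {e : ℝ} {w : Fin d → ℝ}, c ^ 2 ≤ e → ‖w‖ ≤ C → ‖e⁻¹ • w‖ ≤ C / c ^ 2 :=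
    fun he hw => by
      rw [norm_smul, norm_inv, Real.norm_of_nonneg ((pow_pos hc 2).le.trans he), inv_mul_eq_div]
      exact div_le_div₀ ((norm_nonneg _).trans hw) hw (by positivity) he
  calc ‖switchDirection η₁ η₂ g₁ g₂ x‖
      ≤ ‖(η₂ x * (η₁ x - η₂ x))⁻¹ • g₂ x‖ + ‖(η₁ x * (η₁ x - η₂ x))⁻¹ • g₁ x‖ :=
        norm_sub_le _ _
    _ ≤ C / c ^ 2 + C / c ^ 2 := by
        gcongr
        · exact hinv (by nlinarith) hg₂
        · exact hinv (by nlinarith) hg₁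
    _ = 2 * C / c ^ 2 := by ring

theorem abs_Z1_sub_Z1_le (h2 : 0 ≤ η₂ x) (h12 : 0 ≤ η₁ x - η₂ x) (h1 : η₁ x ≤ 1)
    (hclose : ∀ y, |p x y - p₀ x y| ≤ δ) : |Z1 η₁ η₂ p x - Z1 η₁ η₂ p₀ x| ≤ δ := by
  have h10 := abs_le.1 (hclose .y10)
  have h01 := abs_le.1 (hclose .y01)
  have hδ : 0 ≤ δ := (abs_nonneg _).trans (hclose .y10)
  have hZ : Z1 η₁ η₂ p x - Z1 η₁ η₂ p₀ x
      = (p x .y10 - p₀ x .y10) * (η₁ x - η₂ x) - (p x .y01 - p₀ x .y01) * η₂ x := by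
    unfold Z1; ring
  rw [hZ, abs_le]
  constructor <;> nlinarith

theorem abs_Z2_sub_Z2_le (h3 : 0 ≤ η₃ x) (h13 : 0 ≤ η₁ x - η₃ x) (h1 : η₁ x ≤ 1)
    (hclose : ∀ y, |p x y - p₀ x y| ≤ δ) : |Z2 η₁ η₃ p x - Z2 η₁ η₃ p₀ x| ≤ δ :=
  abs_Z1_sub_Z1_le h3 h13 h1 hclose

theorem I2_eq_of_lt_abs (hZ : |Z1 η₁ η₂ p x - Z1 η₁ η₂ p₀ x| ≤ δ)
    (hδ : δ < |Z1 η₁ η₂ p₀ x|) : I2 η₁ η₂ p x = I2 η₁ η₂ p₀ x := by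
  simp only [I2, pos_iff_pos_of_abs_sub_le hZ hδ]

theorem I3_eq_of_lt_abs (hZ : |Z2 η₁ η₃ p x - Z2 η₁ η₃ p₀ x| ≤ δ)
    (hδ : δ < |Z2 η₁ η₃ p₀ x|) : I3 η₁ η₃ p x = I3 η₁ η₃ p₀ x := by
  simp only [I3, neg_iff_neg_of_abs_sub_le hZ hδ]

theorem abs_I2_sub_I2_le_one : |I2 η₁ η₂ p x - I2 η₁ η₂ p₀ x| ≤ 1 := by
  unfold I2; split_ifs <;> norm_num

theorem abs_I3_sub_I3_le_one : |I3 η₁ η₃ p x - I3 η₁ η₃ p₀ x| ≤ 1 := by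
  unfold I3; split_ifs <;> norm_num

theorem Δ_le_indicator_add_indicator (hc : 0 < c) (hη : EtaMargins c η₁ η₂ η₃)
    (hg : ‖g₁ x‖ ≤ C ∧ ‖g₂ x‖ ≤ C ∧ ‖g₃ x‖ ≤ C)
    (hp : ∀ y, 0 ≤ p x y) (hp₀ : ∀ y, 0 ≤ p₀ x y) (hclose : ∀ y, |p x y - p₀ x y| ≤ δ) :
    Δ η₁ η₂ η₃ g₁ g₂ g₃ s00 s11 p p₀ x ≤
      {x | |Z1 η₁ η₂ p₀ x| ≤ δ}.indicator (fun _ => δ * (2 * C / c ^ 2)) x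
        + {x | |Z2 η₁ η₃ p₀ x| ≤ δ}.indicator (fun _ => δ * (2 * C / c ^ 2)) x := by
  obtain ⟨h2, h3, h12, h13, h32, h1⟩ := hη
  rw [Δ, sum_smul_score_sub (hc.trans_le (h2 x)) (hc.trans_le (h3 x))
    (hc.trans_le (h12 x)) (hc.trans_le (h13 x)) (h32 x) hp hp₀]
  refine (norm_add_le _ _).trans (add_le_add ?_ ?_)
  · refine norm_mul_smul_le_indicator abs_I2_sub_I2_le_one (fun hδ => sub_eq_zero.2 ?_)
      (norm_switchDirection_le hc (h2 x) (h12 x) hg.1 hg.2.1)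
    exact I2_eq_of_lt_abs (abs_Z1_sub_Z1_le (hc.trans_le (h2 x)).le
      (hc.trans_le (h12 x)).le (h1 x) hclose) hδ
  · refine norm_mul_smul_le_indicator abs_I3_sub_I3_le_one (fun hδ => sub_eq_zero.2 ?_)
      (norm_switchDirection_le hc (h3 x) (h13 x) hg.1 hg.2.2)
    exact I3_eq_of_lt_abs (abs_Z2_sub_Z2_le (hc.trans_le (h3 x)).le
      (hc.trans_le (h13 x)).le (h1 x) hclose) hδ

theorem norm_sum_smul_score_sub_eq_Δ (x : 𝒳) :
    ‖∑ y, p₀ x y • score η₁ η₂ η₃ g₁ g₂ g₃ s00 s11 p x y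
        - ∑ y, p₀ x y • score η₁ η₂ η₃ g₁ g₂ g₃ s00 s11 p₀ x y‖
      = Δ η₁ η₂ η₃ g₁ g₂ g₃ s00 s11 p p₀ x := by
  simp only [Δ, smul_sub, Finset.sum_sub_distrib]

section Integration

variable [MeasurableSpace 𝒳]

theorem measurable_Z1 (h₁ : Measurable η₁) (h₂ : Measurable η₂)
    (hp : ∀ y, Measurable fun x => p x y) : Measurable (Z1 η₁ η₂ p) :=
  ((hp .y10).mul h₁).sub (((hp .y10).add (hp .y01)).mul h₂)

theorem measurable_score (hmη : Measurable η₁ ∧ Measurable η₂ ∧ Measurable η₃)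
    (hmg : Measurable g₁ ∧ Measurable g₂ ∧ Measurable g₃ ∧ Measurable s00 ∧ Measurable s11)
    (hp : ∀ y, Measurable fun x => p x y) (y : EntryOutcome) :
    Measurable fun x => score η₁ η₂ η₃ g₁ g₂ g₃ s00 s11 p x y := by
  obtain ⟨hη₁, hη₂, hη₃⟩ := hmη
  obtain ⟨hg₁, hg₂, hg₃, hs00, hs11⟩ := hmg
  have hZ1 := measurable_Z1 hη₁ hη₂ hp
  have hZ2 : Measurable (Z2 η₁ η₃ p) := measurable_Z1 hη₁ hη₃ hp
  have hI1 : Measurable (I1 η₁ η₂ η₃ p) :=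
    Measurable.ite ((measurableSet_le hZ1 measurable_const).inter
      (measurableSet_le measurable_const hZ2)) measurable_const measurable_const
  have hI2 : Measurable (I2 η₁ η₂ p) :=
    Measurable.ite (measurableSet_lt measurable_const hZ1) measurable_const measurable_const
  have hI3 : Measurable (I3 η₁ η₃ p) :=
    Measurable.ite (measurableSet_lt hZ2 measurable_const) measurable_const measurable_const
  cases y <;> simp only [score] <;> fun_prop

theorem norm_expectedScoreInt_sub_le {𝒳d : Type*} [Fintype 𝒳d] {Cf : ℝ}
    (μ : Measure 𝒳) [IsFiniteMeasure μ] (Xd : 𝒳 → 𝒳d)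
    (hmη : Measurable η₁ ∧ Measurable η₂ ∧ Measurable η₃)
    (hmg : Measurable g₁ ∧ Measurable g₂ ∧ Measurable g₃ ∧ Measurable s00 ∧ Measurable s11)
    (hc : 0 < c) (hη : EtaMargins c η₁ η₂ η₃) (hC : 0 ≤ C)
    (hg : ∀ x, ‖g₁ x‖ ≤ C ∧ ‖g₂ x‖ ≤ C ∧ ‖g₃ x‖ ≤ C)
    (hmp₀ : ∀ y, Measurable fun x => p₀ x y) (hp₀ : ∀ x y, 0 ≤ p₀ x y)
    (hpdf1 : ∀ xd : 𝒳d, ∀ a b : ℝ, a ≤ b →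
      μ {x | Xd x = xd ∧ Z1 η₁ η₂ p₀ x ∈ Set.Icc a b} ≤ ENNReal.ofReal (Cf * (b - a)))
    (hpdf2 : ∀ xd : 𝒳d, ∀ a b : ℝ, a ≤ b →
      μ {x | Xd x = xd ∧ Z2 η₁ η₃ p₀ x ∈ Set.Icc a b} ≤ ENNReal.ofReal (Cf * (b - a)))
    (hmp : ∀ y, Measurable fun x => p x y) (hp : ∀ x y, 0 ≤ p x y)
    (hδ : 0 ≤ δ) (hclose : ∀ x y, |p x y - p₀ x y| ≤ δ) :
    ‖expectedScoreInt η₁ η₂ η₃ g₁ g₂ g₃ s00 s11 μ p₀ p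
        - expectedScoreInt η₁ η₂ η₃ g₁ g₂ g₃ s00 s11 μ p₀ p₀‖
      ≤ 8 * C * max Cf 0 * Fintype.card 𝒳d / c ^ 2 * δ ^ 2 := by
  set K := δ * (2 * C / c ^ 2)
  set S₁ := {x | |Z1 η₁ η₂ p₀ x| ≤ δ}
  set S₂ := {x | |Z2 η₁ η₃ p₀ x| ≤ δ}
  set m : (𝒳 → EntryOutcome → ℝ) → 𝒳 → Fin d → ℝ :=
    fun q x => ∑ y, p₀ x y • score η₁ η₂ η₃ g₁ g₂ g₃ s00 s11 q x y
  have hS₁ : MeasurableSet S₁ :=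
    measurableSet_le (measurable_Z1 hmη.1 hmη.2.1 hmp₀).abs measurable_const
  have hS₂ : MeasurableSet S₂ :=
    measurableSet_le (measurable_Z1 hmη.1 hmη.2.2 hmp₀).abs measurable_const
  have hm : ∀ q, (∀ y, Measurable fun x => q x y) → Measurable (m q) := fun q hq =>
    Finset.measurable_sum _ fun y _ => (hmp₀ y).smul (measurable_score hmη hmg hq y)
  have hΔ : ∀ x, ‖m p x - m p₀ x‖ ≤ S₁.indicator (fun _ => K) x + S₂.indicator (fun _ => K) x :=
    fun x => (norm_sum_smul_score_sub_eq_Δ x).trans_le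
      (Δ_le_indicator_add_indicator hc hη (hg x) (hp x) (hp₀ x) (hclose x))
  have hbound : Integrable (fun x => S₁.indicator (fun _ => K) x + S₂.indicator (fun _ => K) x) μ :=
    ((integrable_const K).indicator hS₁).add ((integrable_const K).indicator hS₂)
  have hdiff : Integrable (m p - m p₀) μ :=
    hbound.mono' ((hm p hmp).sub (hm p₀ hmp₀)).aestronglyMeasurable (ae_of_all _ hΔ)
  calc ‖∫ x, m p x ∂μ - ∫ x, m p₀ x ∂μ‖
      ≤ ∫ x, ‖m p x - m p₀ x‖ ∂μ := norm_integral_sub_integral_le hdiff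
    _ ≤ ∫ x, (S₁.indicator (fun _ => K) x + S₂.indicator (fun _ => K) x) ∂μ :=
        integral_mono_of_nonneg (ae_of_all _ fun _ => norm_nonneg _) hbound (ae_of_all _ hΔ)
    _ = (μ.real S₁ + μ.real S₂) * K := by
        rw [integral_add ((integrable_const K).indicator hS₁) ((integrable_const K).indicator hS₂),
          integral_indicator_const _ hS₁, integral_indicator_const _ hS₂, smul_eq_mul,
          smul_eq_mul, add_mul]
    _ ≤ (Fintype.card 𝒳d * (max Cf 0 * (2 * δ)) + Fintype.card 𝒳d * (max Cf 0 * (2 * δ))) * K := by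
        gcongr
        · exact measureReal_abs_le_le hδ hpdf1
        · exact measureReal_abs_le_le hδ hpdf2
    _ = 8 * C * max Cf 0 * Fintype.card 𝒳d / c ^ 2 * δ ^ 2 := by ring

end Integration

end EntryGame

/-- **Quadratic remainder for the expected entry-game score (continuous covariates).**
Under boundedness of the model probabilities and their gradients, a lower bound `c` on the
true conditional pmf, and a uniformly bounded conditional density of the regime-switching
quantities `Z_j(X;p₀)` given the discrete covariate subvector `Xd`, the expected score moves
only by `O(δ²)` when the conditional pmf is perturbed by `δ` in the sup norm; hence the
pathwise derivative of `p ↦ E[m_θ(X;p)]` at `p₀` exists and is zero in every direction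
(so the quadratic-remainder expansion of Assumption 2 holds with zero derivative). -/
theorem entry_game_expected_score_quadratic_remainder
    {𝒳 : Type*} [MeasurableSpace 𝒳] {𝒳d : Type*} [Fintype 𝒳d] {d : ℕ}
    (μ : Measure 𝒳) [IsProbabilityMeasure μ]
    (Xd : 𝒳 → 𝒳d)
    (η₁ η₂ η₃ : 𝒳 → ℝ) (g₁ g₂ g₃ s00 s11 : 𝒳 → Fin d → ℝ)
    (hmη : Measurable η₁ ∧ Measurable η₂ ∧ Measurable η₃)
    (hmg : Measurable g₁ ∧ Measurable g₂ ∧ Measurable g₃ ∧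
      Measurable s00 ∧ Measurable s11)
    (c C : ℝ) (hc : 0 < c)
    -- (i) bounds on the model probabilities and their gradients
    (hη₂ : ∀ x, c ≤ η₂ x) (hη₃ : ∀ x, c ≤ η₃ x)
    (hη₁₂ : ∀ x, c ≤ η₁ x - η₂ x) (hη₁₃ : ∀ x, c ≤ η₁ x - η₃ x)
    (hη₃₂ : ∀ x, η₃ x ≤ η₂ x)
    (hηle : ∀ x, η₁ x ≤ 1 ∧ η₂ x ≤ 1 ∧ η₃ x ≤ 1)
    (hg : ∀ x, ‖g₁ x‖ ≤ C ∧ ‖g₂ x‖ ≤ C ∧ ‖g₃ x‖ ≤ C)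
    -- (ii) the true conditional pmf is bounded below
    (p₀ : 𝒳 → EntryOutcome → ℝ)
    (hmp₀ : ∀ y, Measurable fun x => p₀ x y)
    (hp₀ : ∀ x, (∀ y, 0 ≤ p₀ x y) ∧ ∑ y, p₀ x y = 1)
    (hp₀c : ∀ x y, c ≤ p₀ x y)
    -- (iii) uniformly bounded conditional density of `Z_j(X;p₀)` given `Xd`
    (Cf : ℝ)
    (hpdf1 : ∀ xd : 𝒳d, ∀ a b : ℝ, a ≤ b →
      μ {x | Xd x = xd ∧ Z1 η₁ η₂ p₀ x ∈ Set.Icc a b} ≤ ENNReal.ofReal (Cf * (b - a)))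
    (hpdf2 : ∀ xd : 𝒳d, ∀ a b : ℝ, a ≤ b →
      μ {x | Xd x = xd ∧ Z2 η₁ η₃ p₀ x ∈ Set.Icc a b} ≤ ENNReal.ofReal (Cf * (b - a))) :
    (∃ c' : ℝ, 0 ≤ c' ∧
      ∀ δ > (0 : ℝ), ∀ p : 𝒳 → EntryOutcome → ℝ,
        (∀ y, Measurable fun x => p x y) →
        (∀ x, (∀ y, 0 ≤ p x y) ∧ ∑ y, p x y = 1) →
        (∀ x y, |p x y - p₀ x y| ≤ δ) →
        ‖expectedScoreInt η₁ η₂ η₃ g₁ g₂ g₃ s00 s11 μ p₀ p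
            - expectedScoreInt η₁ η₂ η₃ g₁ g₂ g₃ s00 s11 μ p₀ p₀‖ ≤ c' * δ ^ 2) ∧
    (∀ p : 𝒳 → EntryOutcome → ℝ,
      (∀ y, Measurable fun x => p x y) →
      (∀ x, (∀ y, 0 ≤ p x y) ∧ ∑ y, p x y = 1) →
      Tendsto (fun τ : ℝ => τ⁻¹ •
          (expectedScoreInt η₁ η₂ η₃ g₁ g₂ g₃ s00 s11 μ p₀
              (fun x y => p₀ x y + τ * (p x y - p₀ x y))
            - expectedScoreInt η₁ η₂ η₃ g₁ g₂ g₃ s00 s11 μ p₀ p₀))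
        (𝓝[≠] (0 : ℝ)) (𝓝 0)) := by
  have hη : EtaMargins c η₁ η₂ η₃ := ⟨hη₂, hη₃, hη₁₂, hη₁₃, hη₃₂, fun x => (hηle x).1⟩
  have hg' : ∀ x, ‖g₁ x‖ ≤ max C 0 ∧ ‖g₂ x‖ ≤ max C 0 ∧ ‖g₃ x‖ ≤ max C 0 := fun x =>
    ⟨(hg x).1.trans (le_max_left _ _), (hg x).2.1.trans (le_max_left _ _),
      (hg x).2.2.trans (le_max_left _ _)⟩
  have hquad : ∀ δ > (0 : ℝ), ∀ p : 𝒳 → EntryOutcome → ℝ,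
      (∀ y, Measurable fun x => p x y) → IsCondPMF p → (∀ x y, |p x y - p₀ x y| ≤ δ) →
      ‖expectedScoreInt η₁ η₂ η₃ g₁ g₂ g₃ s00 s11 μ p₀ p
          - expectedScoreInt η₁ η₂ η₃ g₁ g₂ g₃ s00 s11 μ p₀ p₀‖
        ≤ 8 * max C 0 * max Cf 0 * Fintype.card 𝒳d / c ^ 2 * δ ^ 2 :=
    fun δ hδ p hmp hp hclose => norm_expectedScoreInt_sub_le μ Xd hmη hmg hc hη
      (le_max_right _ _) hg' hmp₀ (fun x => (hp₀ x).1) hpdf1 hpdf2 hmp (fun x => (hp x).1)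
      hδ.le hclose
  refine ⟨⟨_, by positivity, hquad⟩, fun p hmp hp => ?_⟩
  refine tendsto_inv_smul_of_norm_le_mul_sq
    (K := 8 * max C 0 * max Cf 0 * Fintype.card 𝒳d / c ^ 2) nhdsWithin_le_nhds ?_
  filter_upwards [nhdsWithin_le_nhds (Ioo_mem_nhds (neg_lt_zero.2 hc) hc), self_mem_nhdsWithin]
    with τ hτc hτ0
  rw [← sq_abs τ]
  refine hquad |τ| (abs_pos.2 hτ0) _
    (fun y => (hmp₀ y).add (((hmp y).sub (hmp₀ y)).const_mul τ))
    (IsCondPMF.add_mul_sub hp hp₀ hp₀c (abs_lt.2 hτc).le) fun x y => ?_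
  rw [add_sub_cancel_left, abs_mul]
  exact mul_le_of_le_one_right (abs_nonneg τ) (IsCondPMF.abs_sub_le_one hp hp₀ x y)
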